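/- arXiv:1703.02937 — 3 statements merged into one kernel-verified Lean document; each statement's English description precedes it below -/
import Mathlib

section
/- Let A = (a_ij) be an N×N real matrix with nonnegative entries and zero diagonal such that the directed graph G[A] is strongly connected, and let α_1,…,α_N ≥ 0 satisfy d_i^+[A] · α_i < 1/2 for every i, where d_i^+[A] = Σ_j a_ij. Let y_1,…,y_N : [0,∞) → ℝ^m be continuous functions, define u_i(t) = Σ_{j=1}^N a_ij (y_j(t) − y_i(t)), and suppose there exist constants 𝒱_i ≥ 0 such that ∫_0^T (⟨y_i(t), u_i(t)⟩ + α_i |u_i(t)|²) dt ≥ −𝒱_i for all T ≥ 0 and all i. Then ∫_0^∞ |y_j(t) − y_i(t)|² dt < ∞ for all i, j. -/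
/-!
Strong connectivity yields weights `ξ > 0` with `∑ i, ξ i * a i j = ξ j * d⁺ j`: the
determinant of the Laplacian vanishes, so it has a nonzero left null vector; its absolute
value is again one, and positivity of it spreads forward along arcs.

With these weights `∑ i, ξ i ⟪y i, u i⟫ = -½ ∑ i j, ξ i a i j ‖y j - y i‖²`, and Cauchy–Schwarz gives
`‖u i‖² ≤ d⁺ i ∑ j, a i j ‖y j - y i‖²`. So the `ξ`-weighted sum of the integrands of the passivity
condition is at most `-∑ i j, ξ i (½ - d⁺ i α i) a i j ‖y j - y i‖²`, and integrating bounds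
`∫₀ᵀ` of this nonnegative quantity by `∑ i, ξ i 𝒱 i` uniformly in `T`. Hence `y j - y i` is in
`L²` across each arc, and along paths since `L²` is closed under sums.
-/

open RealInnerProductSpace MeasureTheory

open Finset Set

section Balancing

variable {ι : Type*} [Fintype ι] {A : ι → ι → ℝ} {ξ : ι → ℝ}

/-- `diag ξ * A` is weight balanced, i.e. `ξ` is a left null vector of the Laplacian of `A`. -/
def IsBalancingWeight (A : ι → ι → ℝ) (ξ : ι → ℝ) : Prop :=
  ∀ j, ∑ i, ξ i * A i j = ξ j * ∑ k, A j k

theorem exists_ne_zero_isBalancingWeight [Nonempty ι] (A : ι → ι → ℝ) :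
    ∃ ξ ≠ 0, IsBalancingWeight A ξ := by
  classical
  set L : Matrix ι ι ℝ := Matrix.diagonal (fun i => ∑ k, A i k) - Matrix.of A
  have hL : L.det = 0 := Matrix.exists_mulVec_eq_zero_iff.1 ⟨1, one_ne_zero, by
    ext i; simp [L, Matrix.mulVec, dotProduct, Matrix.diagonal_apply]⟩
  obtain ⟨ξ, hξ0, hξ⟩ := Matrix.exists_vecMul_eq_zero_iff.2 hL
  refine ⟨ξ, hξ0, fun j => ?_⟩
  have := congrFun hξ j
  simp [L, Matrix.vecMul, dotProduct, Matrix.diagonal_apply, mul_sub, sum_sub_distrib] at this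
  linarith

theorem IsBalancingWeight.abs (hA : ∀ i j, 0 ≤ A i j) (hξ : IsBalancingWeight A ξ) :
    IsBalancingWeight A (fun i => |ξ i|) := by
  -- The triangle inequalities `hle` sum to an equality, so each of them is one.
  have hle : ∀ j, |ξ j| * ∑ k, A j k ≤ ∑ i, |ξ i| * A i j := fun j => calc
    |ξ j| * ∑ k, A j k = |∑ i, ξ i * A i j| := by
      rw [hξ j, abs_mul, abs_of_nonneg (sum_nonneg fun k _ => hA j k)]
    _ ≤ ∑ i, |ξ i * A i j| := abs_sum_le_sum_abs _ _
    _ = ∑ i, |ξ i| * A i j := by simp_rw [abs_mul, abs_of_nonneg (hA _ _)]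
  have htotal : ∑ j, |ξ j| * ∑ k, A j k = ∑ j, ∑ i, |ξ i| * A i j := by
    rw [sum_comm]; simp_rw [mul_sum]
  exact fun j => ((sum_eq_sum_iff_of_le fun j _ => hle j).1 htotal j (mem_univ j)).symm

theorem IsBalancingWeight.pos_of_edge (hA : ∀ i j, 0 ≤ A i j) (hξ : IsBalancingWeight A ξ)
    (hξ0 : ∀ i, 0 ≤ ξ i) {a b : ι} (ha : 0 < ξ a) (hab : 0 < A a b) : 0 < ξ b := by
  have : 0 < ξ b * ∑ k, A b k := hξ b ▸ (mul_pos ha hab).trans_le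
    (single_le_sum (fun i _ => mul_nonneg (hξ0 i) (hA i b)) (mem_univ a))
  exact pos_of_mul_pos_left this (sum_nonneg fun k _ => hA b k)

theorem IsBalancingWeight.pos_of_transGen (hA : ∀ i j, 0 ≤ A i j) (hξ : IsBalancingWeight A ξ)
    (hξ0 : ∀ i, 0 ≤ ξ i) {a b : ι} (hab : Relation.TransGen (fun a b => 0 < A a b) a b)
    (ha : 0 < ξ a) : 0 < ξ b := by
  induction hab with
  | single h => exact hξ.pos_of_edge hA hξ0 ha h
  | tail _ h ih => exact hξ.pos_of_edge hA hξ0 ih h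

theorem exists_pos_isBalancingWeight [Nonempty ι] (hA : ∀ i j, 0 ≤ A i j)
    (hconn : ∀ i j, i ≠ j → Relation.TransGen (fun a b => 0 < A a b) i j) :
    ∃ ξ, (∀ i, 0 < ξ i) ∧ IsBalancingWeight A ξ := by
  obtain ⟨ξ, hξ0, hξ⟩ := exists_ne_zero_isBalancingWeight A
  obtain ⟨i, hi⟩ := Function.ne_iff.1 hξ0
  refine ⟨fun j => |ξ j|, fun j => ?_, hξ.abs hA⟩
  rcases eq_or_ne i j with rfl | hij
  · exact abs_pos.2 hi
  · exact (hξ.abs hA).pos_of_transGen hA (fun _ => abs_nonneg _) (hconn i j hij) (abs_pos.2 hi)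

end Balancing

section Dissipation

variable {ι E : Type*} [Fintype ι] [NormedAddCommGroup E] [InnerProductSpace ℝ E]
  {A : ι → ι → ℝ} {ξ : ι → ℝ}

theorem IsBalancingWeight.sum_sum_mul_sub_eq_zero (hξ : IsBalancingWeight A ξ) (φ : ι → ℝ) :
    ∑ a, ∑ b, ξ a * A a b * (φ b - φ a) = 0 := by
  have h1 : ∑ a, ∑ b, ξ a * A a b * φ b = ∑ b, ξ b * (∑ k, A b k) * φ b := by
    rw [sum_comm]; simp_rw [← sum_mul, hξ _]
  have h2 : ∑ a, ∑ b, ξ a * A a b * φ a = ∑ a, ξ a * (∑ k, A a k) * φ a := by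
    simp_rw [mul_sum, sum_mul]
  simp_rw [mul_sub, sum_sub_distrib, h1, h2, sub_self]

theorem IsBalancingWeight.sum_mul_inner_sum_smul_sub_eq (hξ : IsBalancingWeight A ξ) (x : ι → E) :
    ∑ a, ξ a * ⟪x a, ∑ b, A a b • (x b - x a)⟫ =
      -(1 / 2) * ∑ a, ∑ b, ξ a * A a b * ‖x b - x a‖ ^ 2 := by
  have hpt : ∀ a b, ⟪x a, x b - x a⟫ = (‖x b‖ ^ 2 - ‖x a‖ ^ 2) / 2 - ‖x b - x a‖ ^ 2 / 2 := by
    intro a b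
    rw [norm_sub_sq_real, inner_sub_right, real_inner_self_eq_norm_sq, real_inner_comm]
    ring
  have hsplit : ∑ a, ξ a * ⟪x a, ∑ b, A a b • (x b - x a)⟫ =
      (1 / 2) * ∑ a, ∑ b, ξ a * A a b * (‖x b‖ ^ 2 - ‖x a‖ ^ 2)
        - (1 / 2) * ∑ a, ∑ b, ξ a * A a b * ‖x b - x a‖ ^ 2 := by
    rw [mul_sum, mul_sum, ← sum_sub_distrib]
    refine sum_congr rfl fun a _ => ?_
    rw [inner_sum, mul_sum, mul_sum, mul_sum, ← sum_sub_distrib]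
    refine sum_congr rfl fun b _ => ?_
    rw [inner_smul_right, hpt]
    ring
  rw [hsplit, hξ.sum_sum_mul_sub_eq_zero]
  ring

theorem norm_sum_smul_sq_le {c : ι → ℝ} (hc : ∀ i, 0 ≤ c i) (v : ι → E) :
    ‖∑ i, c i • v i‖ ^ 2 ≤ (∑ i, c i) * ∑ i, c i * ‖v i‖ ^ 2 := calc
  ‖∑ i, c i • v i‖ ^ 2 ≤ (∑ i, c i * ‖v i‖) ^ 2 := by
    gcongr
    refine (norm_sum_le _ _).trans_eq (sum_congr rfl fun i _ => ?_)
    rw [norm_smul, Real.norm_of_nonneg (hc i)]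
  _ ≤ (∑ i, c i) * ∑ i, c i * ‖v i‖ ^ 2 :=
    sum_sq_le_sum_mul_sum_of_sq_le_mul _ (fun i _ => hc i) (fun i _ => by have := hc i; positivity)
      (fun i _ => le_of_eq (by ring))

theorem IsBalancingWeight.sum_mul_inner_add_mul_norm_sq_le (hA : ∀ i j, 0 ≤ A i j)
    (hξ : IsBalancingWeight A ξ) (hξ0 : ∀ i, 0 ≤ ξ i) {α : ι → ℝ} (hα : ∀ i, 0 ≤ α i)
    (x : ι → E) :
    ∑ a, ξ a * (⟪x a, ∑ b, A a b • (x b - x a)⟫ + α a * ‖∑ b, A a b • (x b - x a)‖ ^ 2) ≤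
      -∑ a, ∑ b, ξ a * (1 / 2 - (∑ k, A a k) * α a) * A a b * ‖x b - x a‖ ^ 2 := by
  have hu : ∀ a, α a * ‖∑ b, A a b • (x b - x a)‖ ^ 2 ≤
      (∑ k, A a k) * α a * ∑ b, A a b * ‖x b - x a‖ ^ 2 := fun a => calc
    _ ≤ α a * ((∑ k, A a k) * ∑ b, A a b * ‖x b - x a‖ ^ 2) :=
      mul_le_mul_of_nonneg_left (norm_sum_smul_sq_le (hA a) _) (hα a)
    _ = _ := by ring
  calc _ = ∑ a, ξ a * ⟪x a, ∑ b, A a b • (x b - x a)⟫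
        + ∑ a, ξ a * (α a * ‖∑ b, A a b • (x b - x a)‖ ^ 2) := by
        rw [← sum_add_distrib]; simp_rw [mul_add]
    _ ≤ -(1 / 2) * ∑ a, ∑ b, ξ a * A a b * ‖x b - x a‖ ^ 2
        + ∑ a, ξ a * ((∑ k, A a k) * α a * ∑ b, A a b * ‖x b - x a‖ ^ 2) := by
        rw [hξ.sum_mul_inner_sum_smul_sub_eq]
        exact add_le_add_right (sum_le_sum fun a _ => mul_le_mul_of_nonneg_left (hu a) (hξ0 a)) _
    _ = _ := by
        simp_rw [mul_sum, ← sum_neg_distrib, ← sum_add_distrib]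
        refine sum_congr rfl fun a _ => sum_congr rfl fun b _ => by ring

end Dissipation

theorem integrableOn_Ici_of_intervalIntegral_le {g : ℝ → ℝ} (hg : Continuous g)
    (hg0 : ∀ t, 0 ≤ g t) {a C : ℝ} (hC : ∀ T, a ≤ T → ∫ t in a..T, g t ≤ C) :
    IntegrableOn g (Ici a) := by
  rw [integrableOn_Ici_iff_integrableOn_Ioi]
  refine integrableOn_Ioi_of_intervalIntegral_norm_bounded C a (l := Filter.atTop) (b := id)
    (fun _ => hg.integrableOn_Ioc) Filter.tendsto_id ?_
  filter_upwards [Filter.eventually_ge_atTop a] with T hT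
  simpa only [id, Real.norm_of_nonneg (hg0 _)] using hC T hT

theorem intervalIntegral_le_sum_mul_of_le_neg_sum {ι : Type*} [Fintype ι] {f : ι → ℝ → ℝ}
    {g : ℝ → ℝ} (hf : ∀ i, Continuous (f i)) (hg : Continuous g) {ξ V : ι → ℝ}
    (hξ : ∀ i, 0 ≤ ξ i) (hgf : ∀ t, g t ≤ -∑ i, ξ i * f i t) {a b : ℝ} (hab : a ≤ b)
    (hV : ∀ i, -V i ≤ ∫ t in a..b, f i t) :
    ∫ t in a..b, g t ≤ ∑ i, ξ i * V i := calc
  ∫ t in a..b, g t ≤ ∫ t in a..b, -∑ i, ξ i * f i t :=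
    intervalIntegral.integral_mono_on hab (hg.intervalIntegrable a b)
      ((by fun_prop : Continuous fun t => -∑ i, ξ i * f i t).intervalIntegrable a b)
      fun t _ => hgf t
  _ = -∑ i, ξ i * ∫ t in a..b, f i t := by
    rw [intervalIntegral.integral_neg, intervalIntegral.integral_finsetSum
      fun i _ => ((hf i).const_mul (ξ i)).intervalIntegrable a b]
    simp_rw [intervalIntegral.integral_const_mul]
  _ ≤ ∑ i, ξ i * V i := by
    rw [neg_le, ← sum_neg_distrib]
    exact sum_le_sum fun i _ => by nlinarith [mul_le_mul_of_nonneg_left (hV i) (hξ i)]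

theorem MeasureTheory.Integrable.of_const_mul_le {α : Type*} [MeasurableSpace α] {μ : Measure α}
    {f g : α → ℝ} (hg : Integrable g μ) (hf : AEStronglyMeasurable f μ) (hf0 : ∀ x, 0 ≤ f x)
    {k : ℝ} (hk : 0 < k) (hfg : ∀ x, k * f x ≤ g x) : Integrable f μ :=
  (hg.const_mul k⁻¹).mono' hf <| .of_forall fun x => by
    rw [Real.norm_of_nonneg (hf0 x), ← div_eq_inv_mul, le_div_iff₀' hk]
    exact hfg x

theorem memLp_sub_of_integrable_sum_sum {ι α E : Type*} [Fintype ι] [MeasurableSpace α]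
    [NormedAddCommGroup E] {μ : Measure α} {w : ι → ι → ℝ} (hw : ∀ a b, 0 ≤ w a b)
    {y : ι → α → E} (hy : ∀ a, AEStronglyMeasurable (y a) μ)
    (h : Integrable (fun t => ∑ a, ∑ b, w a b * ‖y b t - y a t‖ ^ 2) μ) {a b : ι}
    (hab : 0 < w a b) : MemLp (y b - y a) 2 μ := by
  have hterm : ∀ a b t, 0 ≤ w a b * ‖y b t - y a t‖ ^ 2 := fun a b t =>
    mul_nonneg (hw a b) (sq_nonneg _)
  refine (memLp_two_iff_integrable_sq_norm ((hy b).sub (hy a))).2 <|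
    h.of_const_mul_le (((hy b).sub (hy a)).norm.pow 2) (fun t => sq_nonneg _) hab fun t => ?_
  exact (single_le_sum (fun b _ => hterm a b t) (mem_univ b)).trans
    (single_le_sum (f := fun a => ∑ b, w a b * ‖y b t - y a t‖ ^ 2)
      (fun a _ => sum_nonneg fun b _ => hterm a b t) (mem_univ a))

theorem memLp_sub_of_transGen {ι α E : Type*} [MeasurableSpace α] [NormedAddCommGroup E]
    {μ : Measure α} {p : ENNReal} {r : ι → ι → Prop} {y : ι → α → E}
    (hr : ∀ a b, r a b → MemLp (y b - y a) p μ) {a b : ι} (hab : Relation.TransGen r a b) :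
    MemLp (y b - y a) p μ := by
  induction hab with
  | single h => exact hr _ _ h
  | @tail b c _ h ih => simpa only [sub_add_sub_cancel] using (hr b c h).add ih

theorem output_L2_synchronization_relaxed_general
    (N m : ℕ) (A : Fin N → Fin N → ℝ)
    (hA_nonneg : ∀ i j, 0 ≤ A i j)
    (hconn : ∀ i j : Fin N, i ≠ j → Relation.TransGen (fun a b => 0 < A a b) i j)
    (α : Fin N → ℝ)
    (hα_nonneg : ∀ i, 0 ≤ α i)
    (hα_deg : ∀ i, (∑ j, A i j) * α i < 1 / 2)
    (y : Fin N → ℝ → EuclideanSpace ℝ (Fin m))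
    (hy_cont : ∀ i, Continuous (y i))
    (u : Fin N → ℝ → EuclideanSpace ℝ (Fin m))
    (hu : ∀ i t, u i t = ∑ j, A i j • (y j t - y i t))
    (𝒱 : Fin N → ℝ)
    (hdiss : ∀ i, ∀ T, 0 ≤ T →
      -𝒱 i ≤ ∫ t in (0 : ℝ)..T, (⟪y i t, u i t⟫ + α i * ‖u i t‖ ^ 2)) :
    ∀ i j, IntegrableOn (fun t => ‖y j t - y i t‖ ^ 2) (Set.Ici (0 : ℝ)) := by
  obtain rfl : u = fun i t => ∑ j, A i j • (y j t - y i t) := funext₂ hu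
  intro i j
  have : Nonempty (Fin N) := ⟨i⟩
  obtain ⟨ξ, hξ_pos, hξ⟩ := exists_pos_isBalancingWeight hA_nonneg hconn
  set w : Fin N → Fin N → ℝ := fun a b => ξ a * (1 / 2 - (∑ k, A a k) * α a) * A a b
  have hc : ∀ a, 0 < ξ a * (1 / 2 - (∑ k, A a k) * α a) := fun a =>
    mul_pos (hξ_pos a) (by linarith [hα_deg a])
  have hw : ∀ a b, 0 ≤ w a b := fun a b => mul_nonneg (hc a).le (hA_nonneg a b)
  have hG : IntegrableOn (fun t => ∑ a, ∑ b, w a b * ‖y b t - y a t‖ ^ 2) (Ici 0) :=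
    integrableOn_Ici_of_intervalIntegral_le (by fun_prop)
      (fun t => sum_nonneg fun a _ => sum_nonneg fun b _ => mul_nonneg (hw a b) (sq_nonneg _))
      fun T hT => intervalIntegral_le_sum_mul_of_le_neg_sum (fun a => by fun_prop) (by fun_prop)
        (fun a => (hξ_pos a).le) (fun t => le_neg_of_le_neg <|
          hξ.sum_mul_inner_add_mul_norm_sq_le hA_nonneg (fun a => (hξ_pos a).le) hα_nonneg
            fun a => y a t) hT fun a => hdiss a T hT
  have hL2 : MemLp (y j - y i) 2 (volume.restrict (Ici 0)) := by
    rcases eq_or_ne i j with rfl | hij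
    · simpa only [sub_self] using MemLp.zero
    · exact memLp_sub_of_transGen (fun a b hab => memLp_sub_of_integrable_sum_sum hw
        (fun a => (hy_cont a).aestronglyMeasurable) hG (mul_pos (hc a) hab)) (hconn i j hij)
  exact (memLp_two_iff_integrable_sq_norm (by fun_prop)).1 hL2

/-- Theorem 1, variant with the relaxed integrated feedback-passivity condition:
for agents diffusively coupled over a strongly connected graph with
`d_i⁺[A]·α_i < 1/2`, if `∫_0^T (⟪y_i,u_i⟫ + α_i‖u_i‖²) ≥ -𝒱_i` for all `T ≥ 0`,
then the outputs are `L²`-synchronized: `∫_0^∞ ‖y_j - y_i‖² < ∞` for all `i, j`. -/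
theorem output_L2_synchronization_relaxed
    (N m : ℕ) (A : Fin N → Fin N → ℝ)
    (hA_nonneg : ∀ i j, 0 ≤ A i j)
    (hA_diag : ∀ i, A i i = 0)
    (hconn : ∀ i j : Fin N, i ≠ j → Relation.TransGen (fun a b => 0 < A a b) i j)
    (α : Fin N → ℝ)
    (hα_nonneg : ∀ i, 0 ≤ α i)
    (hα_deg : ∀ i, (∑ j, A i j) * α i < 1 / 2)
    (y : Fin N → ℝ → EuclideanSpace ℝ (Fin m))
    (hy_cont : ∀ i, Continuous (y i))
    (u : Fin N → ℝ → EuclideanSpace ℝ (Fin m))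
    (hu : ∀ i t, u i t = ∑ j, A i j • (y j t - y i t))
    (𝒱 : Fin N → ℝ)
    (h𝒱_nonneg : ∀ i, 0 ≤ 𝒱 i)
    (hdiss : ∀ i, ∀ T, 0 ≤ T →
      -𝒱 i ≤ ∫ t in (0 : ℝ)..T, (⟪y i t, u i t⟫ + α i * ‖u i t‖ ^ 2)) :
    ∀ i j, IntegrableOn (fun t => ‖y j t - y i t‖ ^ 2) (Set.Ici (0 : ℝ)) :=
  output_L2_synchronization_relaxed_general N m A hA_nonneg hconn α hα_nonneg hα_deg y hy_cont u hu
    𝒱 hdiss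
end

section
/- Let A = (a_ij) be an N×N real matrix with nonnegative entries and zero diagonal such that the directed graph G[A] is strongly connected, and let α_1,…,α_N ≥ 0 satisfy d_i^+[A] · α_i < 1/2 for every i. For each i let f_i : ℝ^{n_i} × ℝ^m → ℝ^{n_i} be continuous, h_i : ℝ^{n_i} → ℝ^m be continuously differentiable, and V_i : ℝ^{n_i} → [0,∞) be continuous and radially unbounded (V_i(x) → ∞ as |x| → ∞). Let x_i : [0,∞) → ℝ^{n_i} be continuously differentiable functions with y_i(t) = h_i(x_i(t)), u_i(t) = Σ_{j=1}^N a_ij (y_j(t) − y_i(t)), x_i'(t) = f_i(x_i(t), u_i(t)), and suppose V_i(x_i(T)) − V_i(x_i(0)) ≤ ∫_0^T (⟨y_i(t), u_i(t)⟩ + α_i |u_i(t)|²) dt for all T ≥ 0 and all i. Then each state trajectory x_i is bounded on [0,∞), and the outputs asymptotically synchronize: |y_j(t) − y_i(t)| → 0 as t → ∞ for all i, j. -/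
/-!
Since `L 𝟙 = 0` for the Laplacian `L = diag(d⁺) - A`, `L` has a nonzero left null vector; its
entrywise absolute value is again one, and strong connectivity makes it positive. With these
weights `q`, `∑ q_i ⟨y_i, u_i⟩ = -W / 2` for the disagreement `W = ∑ q_i a_ij |y_j - y_i|²`, while
Cauchy–Schwarz gives `|u_i|² ≤ d_i⁺ ∑_j a_ij |y_j - y_i|²`. Hence `∑ q_i V_i` is a storage
function of the network with supply rate `-ε W`, where `d_i⁺ α_i ≤ 1/2 - ε`: it bounds every
`V_i(x_i)`, so every state by radial unboundedness, and `∫₀^∞ W < ∞`. Bounded states give bounded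
velocities, so `W` is uniformly continuous and Barbalat's lemma gives `W → 0`; the outputs then
synchronize along every arc, hence along every path.
-/

open RealInnerProductSpace MeasureTheory Filter Set Topology Metric

section Graph

variable {ι : Type*} [Fintype ι]

/-- `q` is a left null vector of the Laplacian `diag (fun i => ∑ k, A i k) - A`. -/
def IsBalancing {K : Type*} [Semiring K] (A : ι → ι → K) (q : ι → K) : Prop :=
  ∀ j, ∑ i, q i * A i j = q j * ∑ k, A j k

theorem exists_ne_zero_isBalancing {K : Type*} [Field K] [Nonempty ι] (A : ι → ι → K) :
    ∃ q : ι → K, q ≠ 0 ∧ IsBalancing A q := by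
  classical
  set L : Matrix ι ι K := Matrix.diagonal (fun i => ∑ k, A i k) - Matrix.of A
  have hL : L.mulVec (fun _ => 1) = 0 := by
    ext i
    simp [L, Matrix.mulVec, dotProduct, Matrix.diagonal_apply]
  obtain ⟨q, hq, hqL⟩ :=
    Matrix.exists_vecMul_eq_zero_iff.mpr (Matrix.exists_mulVec_eq_zero_iff.mp ⟨_, one_ne_zero, hL⟩)
  refine ⟨q, hq, fun j => ?_⟩
  have := congrFun hqL j
  rw [Matrix.vecMul_sub, Pi.sub_apply, Matrix.vecMul_diagonal, Pi.zero_apply, sub_eq_zero] at this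
  exact this.symm

theorem IsBalancing.abs {A : ι → ι → ℝ} {q : ι → ℝ} (hq : IsBalancing A q)
    (hA : ∀ i j, 0 ≤ A i j) : IsBalancing A fun i => |q i| := by
  have hle : ∀ j ∈ Finset.univ, |q j| * ∑ k, A j k ≤ ∑ i, |q i| * A i j := fun j _ => by
    calc |q j| * ∑ k, A j k = |∑ i, q i * A i j| := by
          rw [hq j, abs_mul, abs_of_nonneg (Finset.sum_nonneg fun k _ => hA j k)]
      _ ≤ ∑ i, |q i| * A i j := by
          simpa only [abs_mul, abs_of_nonneg (hA _ j)] using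
            Finset.abs_sum_le_sum_abs (fun i => q i * A i j) Finset.univ
  -- both sides of `hle` have the same total `∑ i, |q i| * ∑ k, A i k`
  have hsum : ∑ j, |q j| * ∑ k, A j k = ∑ j, ∑ i, |q i| * A i j := by
    simp only [Finset.mul_sum]
    exact Finset.sum_comm
  exact fun j => ((Finset.sum_eq_sum_iff_of_le hle).mp hsum j (Finset.mem_univ j)).symm

theorem IsBalancing.pos {A : ι → ι → ℝ} {q : ι → ℝ} (hbal : IsBalancing A q)
    (hA : ∀ i j, 0 ≤ A i j) (hconn : ∀ i j, i ≠ j → Relation.TransGen (fun a b => 0 < A a b) i j)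
    (hq0 : ∀ i, 0 ≤ q i) (hq : q ≠ 0) (i : ι) : 0 < q i := by
  have hstep : ∀ a b, 0 < A a b → 0 < q a → 0 < q b := fun a b hab ha => by
    refine pos_of_mul_pos_left ?_ (Finset.sum_nonneg fun k (_ : k ∈ Finset.univ) => hA b k)
    rw [← hbal b]
    exact (mul_pos ha hab).trans_le <|
      Finset.single_le_sum (fun i _ => mul_nonneg (hq0 i) (hA i b)) (Finset.mem_univ a)
  obtain ⟨i₀, hi₀⟩ := Function.ne_iff.mp hq
  have hpos : 0 < q i₀ := (hq0 i₀).lt_of_ne' hi₀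
  have hreach : ∀ b, Relation.TransGen (fun a b => 0 < A a b) i₀ b → 0 < q b := by
    intro b hb
    induction hb with
    | single h => exact hstep _ _ h hpos
    | tail _ h ih => exact hstep _ _ h ih
  rcases eq_or_ne i₀ i with rfl | hne
  · exact hpos
  · exact hreach i (hconn i₀ i hne)

theorem exists_pos_isBalancing {A : ι → ι → ℝ} (hA : ∀ i j, 0 ≤ A i j)
    (hconn : ∀ i j, i ≠ j → Relation.TransGen (fun a b => 0 < A a b) i j) :
    ∃ q : ι → ℝ, (∀ i, 0 < q i) ∧ IsBalancing A q := by
  cases isEmpty_or_nonempty ι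
  · exact ⟨0, isEmptyElim, isEmptyElim⟩
  obtain ⟨q, hq, hbal⟩ := exists_ne_zero_isBalancing A
  have habs := hbal.abs hA
  exact ⟨_, habs.pos hA hconn (fun i => abs_nonneg _)
    fun h => hq (funext fun i => abs_eq_zero.mp (congrFun h i)), habs⟩

end Graph

theorem exists_pos_forall_le_sub {ι : Type*} [Finite ι] {a : ι → ℝ} {c : ℝ}
    (h : ∀ i, a i < c) : ∃ ε > 0, ∀ i, a i ≤ c - ε := by
  cases isEmpty_or_nonempty ι
  · exact ⟨1, one_pos, isEmptyElim⟩
  obtain ⟨i₀, hi₀⟩ := Finite.exists_max a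
  exact ⟨c - a i₀, sub_pos.mpr (h i₀), fun i => by linarith [hi₀ i]⟩

section Disagreement

variable {ι : Type*} [Fintype ι]

def disagreement {E : Type*} [SeminormedAddCommGroup E] (q : ι → ℝ) (A : ι → ι → ℝ)
    (Y : ι → E) : ℝ :=
  ∑ i, ∑ j, q i * A i j * ‖Y j - Y i‖ ^ 2

theorem mul_norm_sub_sq_le_disagreement {E : Type*} [SeminormedAddCommGroup E] {q : ι → ℝ}
    (hq : ∀ i, 0 ≤ q i) {A : ι → ι → ℝ} (hA : ∀ i j, 0 ≤ A i j) (Y : ι → E) (a b : ι) :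
    q a * A a b * ‖Y b - Y a‖ ^ 2 ≤ disagreement q A Y := by
  have hterm : ∀ i j, 0 ≤ q i * A i j * ‖Y j - Y i‖ ^ 2 := fun i j =>
    mul_nonneg (mul_nonneg (hq i) (hA i j)) (sq_nonneg _)
  calc q a * A a b * ‖Y b - Y a‖ ^ 2 ≤ ∑ j, q a * A a j * ‖Y j - Y a‖ ^ 2 :=
        Finset.single_le_sum (fun j _ => hterm a j) (Finset.mem_univ b)
    _ ≤ disagreement q A Y :=
        Finset.single_le_sum (f := fun i => ∑ j, q i * A i j * ‖Y j - Y i‖ ^ 2)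
          (fun i _ => Finset.sum_nonneg fun j _ => hterm i j) (Finset.mem_univ a)

theorem disagreement_nonneg {E : Type*} [SeminormedAddCommGroup E] {q : ι → ℝ}
    (hq : ∀ i, 0 ≤ q i) {A : ι → ι → ℝ} (hA : ∀ i j, 0 ≤ A i j) (Y : ι → E) :
    0 ≤ disagreement q A Y :=
  Finset.sum_nonneg fun i _ => Finset.sum_nonneg fun j _ =>
    mul_nonneg (mul_nonneg (hq i) (hA i j)) (sq_nonneg _)

theorem norm_sum_smul_sq_le_s11 {F : Type*} [SeminormedAddCommGroup F] [NormedSpace ℝ F]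
    {a : ι → ℝ} (ha : ∀ j, 0 ≤ a j) (v : ι → F) :
    ‖∑ j, a j • v j‖ ^ 2 ≤ (∑ j, a j) * ∑ j, a j * ‖v j‖ ^ 2 := by
  calc ‖∑ j, a j • v j‖ ^ 2 ≤ (∑ j, a j * ‖v j‖) ^ 2 := by
        gcongr
        refine (norm_sum_le _ _).trans_eq ?_
        simp only [norm_smul, Real.norm_of_nonneg (ha _)]
    _ ≤ (∑ j, a j) * ∑ j, a j * ‖v j‖ ^ 2 :=
        Finset.sum_sq_le_sum_mul_sum_of_sq_le_mul _ (fun j _ => ha j)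
          (fun j _ => mul_nonneg (ha j) (sq_nonneg _)) fun j _ => (by ring : _ = _).le

variable {E : Type*} [NormedAddCommGroup E] [InnerProductSpace ℝ E]

theorem sum_mul_inner_laplacian {q : ι → ℝ} {A : ι → ι → ℝ}
    (hbal : IsBalancing A q) (Y : ι → E) :
    ∑ i, q i * ⟪Y i, ∑ j, A i j • (Y j - Y i)⟫ = -disagreement q A Y / 2 := by
  have hpolar : ∀ i j, ⟪Y i, Y j - Y i⟫ = (‖Y j‖ ^ 2 - ‖Y i‖ ^ 2 - ‖Y j - Y i‖ ^ 2) / 2 := by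
    intro i j
    rw [norm_sub_sq_real, inner_sub_right, real_inner_self_eq_norm_sq, real_inner_comm]
    ring
  have hswap : ∑ i, ∑ j, q i * A i j * ‖Y j‖ ^ 2 = ∑ i, ∑ j, q i * A i j * ‖Y i‖ ^ 2 := by
    rw [Finset.sum_comm]
    refine Finset.sum_congr rfl fun j _ => ?_
    rw [← Finset.sum_mul, hbal j, Finset.mul_sum, Finset.sum_mul]
  have hterm : ∀ i j, q i * (A i j * ((‖Y j‖ ^ 2 - ‖Y i‖ ^ 2 - ‖Y j - Y i‖ ^ 2) / 2)) =
      (q i * A i j * ‖Y j‖ ^ 2 - q i * A i j * ‖Y i‖ ^ 2 - q i * A i j * ‖Y j - Y i‖ ^ 2) / 2 := by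
    intros; ring
  simp only [inner_sum, real_inner_smul_right, hpolar, Finset.mul_sum, hterm, ← Finset.sum_div,
    Finset.sum_sub_distrib, hswap, disagreement]
  ring

theorem sum_supply_le_neg_mul_disagreement {q : ι → ℝ} (hq : ∀ i, 0 ≤ q i)
    {A : ι → ι → ℝ} (hA : ∀ i j, 0 ≤ A i j) (hbal : IsBalancing A q)
    {α : ι → ℝ} (hα : ∀ i, 0 ≤ α i) {ε : ℝ} (hαε : ∀ i, (∑ j, A i j) * α i ≤ 1 / 2 - ε)
    (Y : ι → E) :
    ∑ i, q i * (⟪Y i, ∑ j, A i j • (Y j - Y i)⟫ + α i * ‖∑ j, A i j • (Y j - Y i)‖ ^ 2)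
      ≤ -ε * disagreement q A Y := by
  have hloc : ∀ i, α i * ‖∑ j, A i j • (Y j - Y i)‖ ^ 2
      ≤ (1 / 2 - ε) * ∑ j, A i j * ‖Y j - Y i‖ ^ 2 := fun i =>
    calc α i * ‖∑ j, A i j • (Y j - Y i)‖ ^ 2
        ≤ α i * ((∑ j, A i j) * ∑ j, A i j * ‖Y j - Y i‖ ^ 2) := by
          gcongr
          · exact hα i
          · exact norm_sum_smul_sq_le_s11 (hA i) _
      _ ≤ (1 / 2 - ε) * ∑ j, A i j * ‖Y j - Y i‖ ^ 2 := by
          rw [← mul_assoc, mul_comm (α i)]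
          exact mul_le_mul_of_nonneg_right (hαε i)
            (Finset.sum_nonneg fun j _ => mul_nonneg (hA i j) (sq_nonneg _))
  have hsum : ∑ i, q i * (α i * ‖∑ j, A i j • (Y j - Y i)‖ ^ 2)
      ≤ (1 / 2 - ε) * disagreement q A Y := by
    calc _ ≤ ∑ i, q i * ((1 / 2 - ε) * ∑ j, A i j * ‖Y j - Y i‖ ^ 2) :=
          Finset.sum_le_sum fun i _ => mul_le_mul_of_nonneg_left (hloc i) (hq i)
      _ = (1 / 2 - ε) * disagreement q A Y := by
          simp only [disagreement, Finset.mul_sum]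
          exact Finset.sum_congr rfl fun i _ => Finset.sum_congr rfl fun j _ => by ring
  simp only [mul_add, Finset.sum_add_distrib, sum_mul_inner_laplacian hbal]
  linarith

end Disagreement

theorem sum_mul_integral_le_neg_mul_integral {ι : Type*} [Fintype ι] {q : ι → ℝ}
    {s : ι → ℝ → ℝ} {W : ℝ → ℝ} {ε a b : ℝ} (hab : a ≤ b)
    (hs : ∀ i, ContinuousOn (s i) (Icc a b)) (hW : ContinuousOn W (Icc a b))
    (hsW : ∀ t, ∑ i, q i * s i t ≤ -ε * W t) :
    ∑ i, q i * ∫ t in a..b, s i t ≤ -ε * ∫ t in a..b, W t := by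
  have hsi : ∀ i, IntervalIntegrable (s i) volume a b := fun i =>
    (hs i).intervalIntegrable_of_Icc hab
  calc ∑ i, q i * ∫ t in a..b, s i t = ∫ t in a..b, ∑ i, q i * s i t := by
        rw [intervalIntegral.integral_finsetSum fun i _ => (hsi i).const_mul (q i)]
        simp only [intervalIntegral.integral_const_mul]
    _ ≤ ∫ t in a..b, -ε * W t :=
        intervalIntegral.integral_mono_on hab
          (ContinuousOn.intervalIntegrable_of_Icc hab <|
            continuousOn_finsetSum _ fun i _ => continuousOn_const.mul (hs i))
          ((hW.intervalIntegrable_of_Icc hab).const_mul _) fun t _ => hsW t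
    _ = -ε * ∫ t in a..b, W t := intervalIntegral.integral_const_mul _ _

theorem sum_mul_storage_add_integral_disagreement_le {ι E : Type*} [Fintype ι]
    [NormedAddCommGroup E] [InnerProductSpace ℝ E] {q : ι → ℝ} (hq : ∀ i, 0 ≤ q i)
    {A : ι → ι → ℝ} (hA : ∀ i j, 0 ≤ A i j) (hbal : IsBalancing A q)
    {α : ι → ℝ} (hα : ∀ i, 0 ≤ α i) {ε : ℝ} (hαε : ∀ i, (∑ j, A i j) * α i ≤ 1 / 2 - ε)
    {y u : ι → ℝ → E} (hy : ∀ i, ContinuousOn (y i) (Ici 0))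
    (hu : ∀ i t, u i t = ∑ j, A i j • (y j t - y i t)) {S : ι → ℝ → ℝ} {T : ℝ} (hT : 0 ≤ T)
    (hS : ∀ i, S i T - S i 0 ≤ ∫ t in (0 : ℝ)..T, (⟪y i t, u i t⟫ + α i * ‖u i t‖ ^ 2)) :
    ∑ i, q i * S i T + ε * ∫ t in (0 : ℝ)..T, disagreement q A (fun i => y i t)
      ≤ ∑ i, q i * S i 0 := by
  have hy' : ∀ i, ContinuousOn (y i) (Icc 0 T) := fun i => (hy i).mono Icc_subset_Ici_self
  have hu' : ∀ i, ContinuousOn (u i) (Icc 0 T) := fun i => by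
    rw [show u i = fun t => ∑ j, A i j • (y j t - y i t) from funext (hu i)]
    fun_prop
  have := (Finset.sum_le_sum fun i _ => mul_le_mul_of_nonneg_left (hS i) (hq i)).trans
    (sum_mul_integral_le_neg_mul_integral (s := fun i t => ⟪y i t, u i t⟫ + α i * ‖u i t‖ ^ 2)
      (W := fun t => disagreement q A (fun i => y i t)) hT
      (fun i => ((hy' i).inner (hu' i)).add (((hu' i).norm.pow 2).const_smul (α i)))
      (by unfold disagreement; fun_prop)
      fun t => by simpa only [hu] using sum_supply_le_neg_mul_disagreement hq hA hbal hα hαε _)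
  simp only [mul_sub, Finset.sum_sub_distrib] at this
  linarith

theorem exists_norm_le_of_le_of_radial {E : Type*} [SeminormedAddCommGroup E] {V : E → ℝ}
    (hV : ∀ c : ℝ, ∃ r : ℝ, ∀ x, r ≤ ‖x‖ → c ≤ V x) (c : ℝ) :
    ∃ R, ∀ x, V x ≤ c → ‖x‖ ≤ R := by
  obtain ⟨r, hr⟩ := hV (c + 1)
  refine ⟨r, fun x hx => ?_⟩
  by_contra! hrx
  linarith [hr x hrx.le]

theorem exists_mul_le_integral_of_frequently {W : ℝ → ℝ} (hW : ContinuousOn W (Ici 0))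
    (hW0 : ∀ t, 0 ≤ t → 0 ≤ W t) {δ c : ℝ} (hδ : 0 ≤ δ)
    (hbump : ∀ T, 0 ≤ T → ∃ t, T ≤ t ∧ c ≤ ∫ s in t..t + δ, W s) (k : ℕ) :
    ∃ T, 0 ≤ T ∧ k * c ≤ ∫ t in (0 : ℝ)..T, W t := by
  have hWi : ∀ a b : ℝ, 0 ≤ a → a ≤ b → IntervalIntegrable W volume a b := fun a b ha hab =>
    (hW.mono fun t ht => ha.trans ht.1).intervalIntegrable_of_Icc hab
  induction k with
  | zero => exact ⟨0, le_rfl, by simp⟩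
  | succ k ih =>
    obtain ⟨T, hT, hTk⟩ := ih
    obtain ⟨t, ht, hct⟩ := hbump T hT
    have ht0 : 0 ≤ t := hT.trans ht
    refine ⟨t + δ, by linarith, ?_⟩
    rw [← intervalIntegral.integral_add_adjacent_intervals (hWi 0 T le_rfl hT)
        (hWi T (t + δ) hT (by linarith)),
      ← intervalIntegral.integral_add_adjacent_intervals (hWi T t hT ht)
        (hWi t (t + δ) ht0 (by linarith))]
    have hmid : 0 ≤ ∫ s in T..t, W s :=
      intervalIntegral.integral_nonneg ht fun s hs => hW0 s (hT.trans hs.1)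
    push_cast
    linarith

theorem tendsto_zero_of_uniformContinuousOn_of_integral_le {W : ℝ → ℝ} {C : ℝ}
    (hW : UniformContinuousOn W (Ici 0)) (hW0 : ∀ t, 0 ≤ t → 0 ≤ W t)
    (hint : ∀ T, 0 ≤ T → ∫ t in (0 : ℝ)..T, W t ≤ C) :
    Tendsto W atTop (𝓝 0) := by
  rw [Metric.tendsto_atTop]
  by_contra! hfreq
  obtain ⟨ε, hε, hfreq⟩ := hfreq
  obtain ⟨δ, hδ, hδW⟩ := Metric.uniformContinuousOn_iff_le.mp hW (ε / 2) (half_pos hε)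
  have hbump : ∀ T, 0 ≤ T → ∃ t, T ≤ t ∧ δ * (ε / 2) ≤ ∫ s in t..t + δ, W s := by
    intro T hT
    obtain ⟨t, ht, hWt⟩ := hfreq T
    have ht0 : 0 ≤ t := hT.trans ht
    rw [Real.dist_eq, sub_zero, abs_of_nonneg (hW0 t ht0)] at hWt
    have hlow : ∀ s ∈ Icc t (t + δ), ε / 2 ≤ W s := fun s hs => by
      have hst : dist s t ≤ δ := by
        rw [Real.dist_eq, abs_le]
        constructor <;> linarith [hs.1, hs.2]
      have := hδW s (ht0.trans hs.1) t ht0 hst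
      rw [Real.dist_eq, abs_le] at this
      linarith
    refine ⟨t, ht, ?_⟩
    calc δ * (ε / 2) = ∫ _ in t..t + δ, ε / 2 := by simp [mul_div_assoc]
      _ ≤ ∫ s in t..t + δ, W s :=
        intervalIntegral.integral_mono_on (by linarith) intervalIntegrable_const
          ((hW.continuousOn.mono fun s hs => ht0.trans hs.1).intervalIntegrable_of_Icc
            (by linarith)) hlow
  obtain ⟨k, hk⟩ := exists_nat_gt (C / (δ * (ε / 2)))
  obtain ⟨T, hT, hTk⟩ := exists_mul_le_integral_of_frequently hW.continuousOn hW0 hδ.le hbump k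
  rw [div_lt_iff₀ (by positivity)] at hk
  linarith [hint T hT]

theorem Relation.TransGen.tendsto_norm_sub {ι α E : Type*} [SeminormedAddCommGroup E]
    {r : ι → ι → Prop} {z : ι → α → E} {l : Filter α}
    (harc : ∀ a b, r a b → Tendsto (fun t => ‖z b t - z a t‖) l (𝓝 0)) {i j : ι}
    (hij : Relation.TransGen r i j) : Tendsto (fun t => ‖z j t - z i t‖) l (𝓝 0) := by
  induction hij with
  | single h => exact harc _ _ h
  | @tail b c _ h ih =>
    refine squeeze_zero (fun t => norm_nonneg _)
      (fun t => norm_sub_le_norm_sub_add_norm_sub _ (z b t) _) ?_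
    simpa using (harc _ _ h).add ih

theorem tendsto_norm_sub_of_tendsto_disagreement {ι α E : Type*} [Fintype ι]
    [SeminormedAddCommGroup E] {q : ι → ℝ} (hq : ∀ i, 0 < q i) {A : ι → ι → ℝ}
    (hA : ∀ i j, 0 ≤ A i j)
    (hconn : ∀ i j, i ≠ j → Relation.TransGen (fun a b => 0 < A a b) i j)
    {z : ι → α → E} {l : Filter α}
    (hW : Tendsto (fun t => disagreement q A (fun i => z i t)) l (𝓝 0)) (i j : ι) :
    Tendsto (fun t => ‖z j t - z i t‖) l (𝓝 0) := by
  rcases eq_or_ne i j with rfl | hne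
  · simpa using tendsto_const_nhds
  refine (hconn i j hne).tendsto_norm_sub fun a b hab => ?_
  have hc : 0 < q a * A a b := mul_pos (hq a) hab
  have hle : ∀ t, ‖z b t - z a t‖ ≤ √(disagreement q A (fun i => z i t) / (q a * A a b)) :=
    fun t => (Real.le_sqrt (norm_nonneg _)
      (div_nonneg (disagreement_nonneg (fun i => (hq i).le) hA _) hc.le)).mpr <|
        (le_div_iff₀' hc).mpr
          (mul_norm_sub_sq_le_disagreement (fun i => (hq i).le) hA (fun i => z i t) a b)
  refine squeeze_zero (fun t => norm_nonneg _) hle ?_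
  simpa using (hW.div_const (q a * A a b)).sqrt

theorem UniformContinuousOn.comp_of_isCompact {α β γ : Type*} [UniformSpace α] [UniformSpace β]
    [UniformSpace γ] {z : α → β} {s : Set α} (hz : UniformContinuousOn z s) {K : Set β}
    (hK : IsCompact K) (hzK : MapsTo z s K) {g : β → γ} (hg : Continuous g) :
    UniformContinuousOn (g ∘ z) s :=
  (hK.uniformContinuousOn_of_continuous hg.continuousOn).comp hz hzK

theorem uniformContinuousOn_pi {ι α : Type*} {β : ι → Type*} [UniformSpace α]
    [∀ i, UniformSpace (β i)] {z : α → ∀ i, β i} {s : Set α} :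
    UniformContinuousOn z s ↔ ∀ i, UniformContinuousOn (fun a => z a i) s := by
  simp only [uniformContinuousOn_iff_restrict, uniformContinuous_pi]
  rfl

theorem uniformContinuousOn_Ici_of_hasDerivAt_of_mapsTo {P F : Type*} [TopologicalSpace P]
    [NormedAddCommGroup F] [NormedSpace ℝ F] {g : P → F} (hg : Continuous g) {K : Set P}
    (hK : IsCompact K) {z : ℝ → F} {w : ℝ → P} (hw : MapsTo w (Ici 0) K)
    (hz : ∀ t, 0 ≤ t → HasDerivAt z (g (w t)) t) : UniformContinuousOn z (Ici 0) := by
  obtain ⟨C, hC⟩ := hK.exists_bound_of_continuousOn hg.continuousOn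
  refine ((convex_Ici 0).lipschitzOnWith_of_nnnorm_hasDerivWithin_le (C := C.toNNReal)
    (fun t ht => (hz t ht).hasDerivWithinAt) fun t ht => ?_).uniformContinuousOn
  rw [Real.le_toNNReal_iff_coe_le ((norm_nonneg _).trans (hC _ (hw ht))), coe_nnnorm]
  exact hC _ (hw ht)

theorem tendsto_norm_sub_of_integral_disagreement_le {ι : Type*} [Fintype ι] {E : ι → Type*}
    [∀ i, NormedAddCommGroup (E i)] [∀ i, NormedSpace ℝ (E i)] [∀ i, ProperSpace (E i)]
    {F : Type*} [NormedAddCommGroup F] [NormedSpace ℝ F] {A : ι → ι → ℝ}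
    (hA : ∀ i j, 0 ≤ A i j) (hconn : ∀ i j, i ≠ j → Relation.TransGen (fun a b => 0 < A a b) i j)
    {q : ι → ℝ} (hq : ∀ i, 0 < q i) {f : ∀ i, E i × F → E i} (hf : ∀ i, Continuous (f i))
    {h : ∀ i, E i → F} (hh : ∀ i, Continuous (h i)) {x : ∀ i, ℝ → E i} {y u : ι → ℝ → F}
    (hy : ∀ i t, y i t = h i (x i t)) (hu : ∀ i t, u i t = ∑ j, A i j • (y j t - y i t))
    (hode : ∀ i t, 0 ≤ t → HasDerivAt (x i) (f i (x i t, u i t)) t) {R : ι → ℝ}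
    (hxR : ∀ i t, 0 ≤ t → ‖x i t‖ ≤ R i) {C : ℝ}
    (hint : ∀ T, 0 ≤ T → ∫ t in (0 : ℝ)..T, disagreement q A (fun i => y i t) ≤ C) (i j : ι) :
    Tendsto (fun t => ‖y j t - y i t‖) atTop (𝓝 0) := by
  set K : Set (∀ _ : ι, F) := univ.pi fun i => h i '' closedBall 0 (R i)
  have hK : IsCompact K := isCompact_univ_pi fun i => (isCompact_closedBall _ _).image (hh i)
  have hxK : ∀ i, MapsTo (x i) (Ici 0) (closedBall 0 (R i)) := fun i t ht =>
    mem_closedBall_zero_iff.mpr (hxR i t ht)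
  have hyK : MapsTo (fun t i => y i t) (Ici 0) K := fun t ht i _ =>
    ⟨x i t, hxK i ht, (hy i t).symm⟩
  have hx_uc : ∀ i, UniformContinuousOn (x i) (Ici 0) := fun i =>
    uniformContinuousOn_Ici_of_hasDerivAt_of_mapsTo (hf i)
      ((isCompact_closedBall _ _).prod (hK.image (f := fun Y => ∑ j, A i j • (Y j - Y i))
        (by fun_prop)))
      (fun t ht => ⟨hxK i ht, _, hyK ht, (hu i t).symm⟩) (hode i)
  have hy_uc : ∀ i, UniformContinuousOn (y i) (Ici 0) := fun i => by
    rw [show y i = h i ∘ x i from funext (hy i)]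
    exact (hx_uc i).comp_of_isCompact (isCompact_closedBall _ _) (hxK i) (hh i)
  have hW_uc : UniformContinuousOn (fun t => disagreement q A (fun i => y i t)) (Ici 0) :=
    (uniformContinuousOn_pi.mpr hy_uc).comp_of_isCompact hK hyK (g := disagreement q A)
      (by unfold disagreement; fun_prop)
  exact tendsto_norm_sub_of_tendsto_disagreement hq hA hconn
    (tendsto_zero_of_uniformContinuousOn_of_integral_le hW_uc
      (fun t _ => disagreement_nonneg (fun i => (hq i).le) hA _) hint) i j

theorem output_synchronization_bounded_states_general
    (N m : ℕ) (n : Fin N → ℕ) (A : Fin N → Fin N → ℝ)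
    (hA_nonneg : ∀ i j, 0 ≤ A i j)
    (hconn : ∀ i j : Fin N, i ≠ j → Relation.TransGen (fun a b => 0 < A a b) i j)
    (α : Fin N → ℝ)
    (hα_nonneg : ∀ i, 0 ≤ α i)
    (hα_deg : ∀ i, (∑ j, A i j) * α i < 1 / 2)
    (f : ∀ i : Fin N,
      EuclideanSpace ℝ (Fin (n i)) × EuclideanSpace ℝ (Fin m) →
        EuclideanSpace ℝ (Fin (n i)))
    (hf_cont : ∀ i, Continuous (f i))
    (h : ∀ i : Fin N, EuclideanSpace ℝ (Fin (n i)) → EuclideanSpace ℝ (Fin m))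
    (hh_smooth : ∀ i, ContDiff ℝ 1 (h i))
    (V : ∀ i : Fin N, EuclideanSpace ℝ (Fin (n i)) → ℝ)
    (hV_nonneg : ∀ i x, 0 ≤ V i x)
    (hV_radial : ∀ i, ∀ c : ℝ, ∃ r : ℝ, ∀ x, r ≤ ‖x‖ → c ≤ V i x)
    (x : ∀ i : Fin N, ℝ → EuclideanSpace ℝ (Fin (n i)))
    (y u : Fin N → ℝ → EuclideanSpace ℝ (Fin m))
    (hy : ∀ i t, y i t = h i (x i t))
    (hu : ∀ i t, u i t = ∑ j, A i j • (y j t - y i t))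
    (hode : ∀ i t, 0 ≤ t → HasDerivAt (x i) (f i (x i t, u i t)) t)
    (hdiss : ∀ i, ∀ T, 0 ≤ T →
      V i (x i T) - V i (x i 0) ≤
        ∫ t in (0 : ℝ)..T, (⟪y i t, u i t⟫ + α i * ‖u i t‖ ^ 2)) :
    (∀ i, ∃ C : ℝ, ∀ t, 0 ≤ t → ‖x i t‖ ≤ C) ∧
    (∀ i j, Filter.Tendsto (fun t => ‖y j t - y i t‖) Filter.atTop (nhds 0)) := by
  obtain ⟨q, hq, hbal⟩ := exists_pos_isBalancing hA_nonneg hconn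
  obtain ⟨ε, hε, hαε⟩ := exists_pos_forall_le_sub hα_deg
  have hy_cont : ∀ i, ContinuousOn (y i) (Ici 0) := fun i => by
    rw [show y i = h i ∘ x i from funext (hy i)]
    exact (hh_smooth i).continuous.comp_continuousOn fun t ht =>
      (hode i t ht).continuousAt.continuousWithinAt
  set C₀ := ∑ i, q i * V i (x i 0)
  have henergy : ∀ T, 0 ≤ T → ∑ i, q i * V i (x i T) +
      ε * ∫ t in (0 : ℝ)..T, disagreement q A (fun i => y i t) ≤ C₀ := fun T hT =>
    sum_mul_storage_add_integral_disagreement_le (fun i => (hq i).le) hA_nonneg hbal hα_nonneg hαε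
      hy_cont hu (S := fun i t => V i (x i t)) hT fun i => hdiss i T hT
  have hdis : ∀ T, 0 ≤ T → 0 ≤ ε * ∫ t in (0 : ℝ)..T, disagreement q A (fun i => y i t) :=
    fun T hT => mul_nonneg hε.le <| intervalIntegral.integral_nonneg hT fun t _ =>
      disagreement_nonneg (fun i => (hq i).le) hA_nonneg _
  have hqV : ∀ i t, q i * V i (x i t) ≤ ∑ k, q k * V k (x k t) := fun i t =>
    Finset.single_le_sum (fun k _ => mul_nonneg (hq k).le (hV_nonneg k (x k t))) (Finset.mem_univ i)
  have hV_le : ∀ i t, 0 ≤ t → V i (x i t) ≤ C₀ / q i := fun i t ht => by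
    rw [le_div_iff₀' (hq i)]
    linarith [henergy t ht, hdis t ht, hqV i t]
  choose R hR using fun i => exists_norm_le_of_le_of_radial (hV_radial i) (C₀ / q i)
  have hxR : ∀ i t, 0 ≤ t → ‖x i t‖ ≤ R i := fun i t ht => hR i _ (hV_le i t ht)
  refine ⟨fun i => ⟨R i, hxR i⟩, tendsto_norm_sub_of_integral_disagreement_le hA_nonneg hconn hq
    hf_cont (fun i => (hh_smooth i).continuous) hy hu hode hxR (C := C₀ / ε) fun T hT => ?_⟩
  rw [le_div_iff₀' hε]
  have := Finset.sum_nonneg fun i (_ : i ∈ Finset.univ) =>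
    mul_nonneg (hq i).le (hV_nonneg i (x i T))
  linarith [henergy T hT]

/-- Theorem 1, statement (2): for IFP(α_i) agents `ẋ_i = f_i(x_i,u_i)`,
`y_i = h_i(x_i)` with radially unbounded storage functions, diffusively coupled
over a strongly connected graph with `d_i⁺[A]·α_i < 1/2`, every state trajectory
is bounded on `[0,∞)` and the outputs asymptotically synchronize. -/
theorem output_synchronization_bounded_states
    (N m : ℕ) (n : Fin N → ℕ) (A : Fin N → Fin N → ℝ)
    (hA_nonneg : ∀ i j, 0 ≤ A i j)
    (hA_diag : ∀ i, A i i = 0)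
    (hconn : ∀ i j : Fin N, i ≠ j → Relation.TransGen (fun a b => 0 < A a b) i j)
    (α : Fin N → ℝ)
    (hα_nonneg : ∀ i, 0 ≤ α i)
    (hα_deg : ∀ i, (∑ j, A i j) * α i < 1 / 2)
    (f : ∀ i : Fin N,
      EuclideanSpace ℝ (Fin (n i)) × EuclideanSpace ℝ (Fin m) →
        EuclideanSpace ℝ (Fin (n i)))
    (hf_cont : ∀ i, Continuous (f i))
    (h : ∀ i : Fin N, EuclideanSpace ℝ (Fin (n i)) → EuclideanSpace ℝ (Fin m))
    (hh_smooth : ∀ i, ContDiff ℝ 1 (h i))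
    (V : ∀ i : Fin N, EuclideanSpace ℝ (Fin (n i)) → ℝ)
    (hV_cont : ∀ i, Continuous (V i))
    (hV_nonneg : ∀ i x, 0 ≤ V i x)
    (hV_radial : ∀ i, ∀ c : ℝ, ∃ r : ℝ, ∀ x, r ≤ ‖x‖ → c ≤ V i x)
    (x : ∀ i : Fin N, ℝ → EuclideanSpace ℝ (Fin (n i)))
    (y u : Fin N → ℝ → EuclideanSpace ℝ (Fin m))
    (hy : ∀ i t, y i t = h i (x i t))
    (hu : ∀ i t, u i t = ∑ j, A i j • (y j t - y i t))
    (hode : ∀ i t, 0 ≤ t → HasDerivAt (x i) (f i (x i t, u i t)) t)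
    (hdiss : ∀ i, ∀ T, 0 ≤ T →
      V i (x i T) - V i (x i 0) ≤
        ∫ t in (0 : ℝ)..T, (⟪y i t, u i t⟫ + α i * ‖u i t‖ ^ 2)) :
    (∀ i, ∃ C : ℝ, ∀ t, 0 ≤ t → ‖x i t‖ ≤ C) ∧
    (∀ i j, Filter.Tendsto (fun t => ‖y j t - y i t‖) Filter.atTop (nhds 0)) :=
  output_synchronization_bounded_states_general N m n A hA_nonneg hconn α hα_nonneg hα_deg f hf_cont
    h hh_smooth V hV_nonneg hV_radial x y u hy hu hode hdiss
end

section
/- Let τ > 0 and μ > 0 be real constants, and let ε : [0,∞) → ℝ be twice continuously differentiable such that the function g(t) = τε''(t) + ε'(t) + με(t) satisfies ∫_0^∞ |g(t)|² dt < ∞. Then ∫_0^∞ |ε(t)|² dt < ∞, ∫_0^∞ |ε'(t)|² dt < ∞, and ε(t) → 0 as t → ∞. -/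
open MeasureTheory Set Filter Topology

/-! The energy `μ ε² + τ ε'²` has derivative `2ε'g - 2ε'² ≤ g² - ε'²`, so it stays bounded and
`∫ ε'² ≤ energy(0) + ∫ g²`. The cross term `2τεε' + ε² = (τε' + ε)² - τ²ε'²` is bounded below by
`-τ²ε'²` and has derivative `2τε'² + 2εg - 2με² ≤ 2τε'² + g²/μ - με²`; integrating bounds `∫ ε²`.
Finally `(ε²)' = 2εε'` is integrable, so the integrable function `ε²` has a limit, which must be
zero. -/

theorem integrableOn_Ici_of_intervalIntegral_le_s16 {f : ℝ → ℝ} {a C : ℝ} (hf : LocallyIntegrable f)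
    (hf0 : 0 ≤ f) (hC : ∀ b, a ≤ b → ∫ t in a..b, f t ≤ C) : IntegrableOn f (Ici a) := by
  rw [integrableOn_Ici_iff_integrableOn_Ioi]
  refine integrableOn_Ioi_of_intervalIntegral_norm_bounded C a
    (fun b => (hf.integrableOn_isCompact isCompact_Icc).mono_set Ioc_subset_Icc_self) tendsto_id ?_
  filter_upwards [eventually_ge_atTop a] with b hb
  simpa only [id, Real.norm_of_nonneg (hf0 _)] using hC b hb

theorem intervalIntegral_le_setIntegral_Ici {f : ℝ → ℝ} {a b : ℝ} (hf : IntegrableOn f (Ici a))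
    (hf0 : 0 ≤ f) (hab : a ≤ b) : ∫ t in a..b, f t ≤ ∫ t in Ici a, f t := by
  rw [intervalIntegral.integral_of_le hab]
  exact setIntegral_mono_set hf (.of_forall hf0)
    (Ioc_subset_Icc_self.trans Icc_subset_Ici_self).eventuallyLE

theorem tendsto_zero_of_integrableOn_sq {f f' : ℝ → ℝ} {a : ℝ} (hf : ∀ t, HasDerivAt f (f' t) t)
    (hf2 : IntegrableOn (fun t => f t ^ 2) (Ioi a))
    (hf'2 : IntegrableOn (fun t => f' t ^ 2) (Ioi a)) : Tendsto f atTop (𝓝 0) := by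
  have hf'_meas : Measurable f' := by
    rw [show f' = deriv f from funext fun t => (hf t).deriv.symm]
    exact measurable_deriv f
  have hf_cont : Continuous f := continuous_iff_continuousAt.2 fun t => (hf t).continuousAt
  have hprod : IntegrableOn (fun t => 2 * f t * f' t) (Ioi a) := by
    refine (hf2.add hf'2).mono' (by fun_prop) (.of_forall fun t => ?_)
    rw [Pi.add_apply, Real.norm_eq_abs, abs_le]
    constructor <;> nlinarith [sq_nonneg (f t + f' t), sq_nonneg (f t - f' t)]
  have hsq : Tendsto (fun t => f t ^ 2) atTop (𝓝 0) :=
    tendsto_zero_of_hasDerivAt_of_integrableOn_Ioi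
      (fun t _ => ((hf t).pow 2).congr_deriv (by ring)) hprod hf2
  exact (tendsto_zero_iff_abs_tendsto_zero f).2 <| by
    simpa only [Function.comp_def, Real.sqrt_sq_eq_abs, Real.sqrt_zero] using hsq.sqrt

structure IsDampedOscillatorSolution (τ μ : ℝ) (g ε ε' ε'' : ℝ → ℝ) : Prop where
  hasDerivAt : ∀ t, HasDerivAt ε (ε' t) t
  hasDerivAt_deriv : ∀ t, HasDerivAt ε' (ε'' t) t
  continuous_deriv₂ : Continuous ε''
  forcing_eq : ∀ t, g t = τ * ε'' t + ε' t + μ * ε t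

namespace IsDampedOscillatorSolution

variable {τ μ : ℝ} {g ε ε' ε'' : ℝ → ℝ} {a b : ℝ}

theorem continuous (h : IsDampedOscillatorSolution τ μ g ε ε' ε'') : Continuous ε :=
  continuous_iff_continuousAt.2 fun t => (h.hasDerivAt t).continuousAt

theorem continuous_deriv (h : IsDampedOscillatorSolution τ μ g ε ε' ε'') : Continuous ε' :=
  continuous_iff_continuousAt.2 fun t => (h.hasDerivAt_deriv t).continuousAt

theorem continuous_forcing (h : IsDampedOscillatorSolution τ μ g ε ε' ε'') : Continuous g := by
  have := h.continuous; have := h.continuous_deriv; have := h.continuous_deriv₂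
  rw [funext h.forcing_eq]
  fun_prop

theorem energy_add_integral_le (h : IsDampedOscillatorSolution τ μ g ε ε' ε'') (hab : a ≤ b) :
    μ * ε b ^ 2 + τ * ε' b ^ 2 + (∫ t in a..b, ε' t ^ 2) ≤
      μ * ε a ^ 2 + τ * ε' a ^ 2 + (∫ t in a..b, g t ^ 2) := by
  have hε := h.continuous; have hε' := h.continuous_deriv; have hg := h.continuous_forcing
  have hV : ∀ t, HasDerivAt (fun t => μ * ε t ^ 2 + τ * ε' t ^ 2)
      (2 * ε' t * g t - 2 * ε' t ^ 2) t := fun t =>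
    ((((h.hasDerivAt t).pow 2).const_mul μ).add (((h.hasDerivAt_deriv t).pow 2).const_mul τ)
      ).congr_deriv (by rw [h.forcing_eq t]; push_cast; ring)
  have hle := intervalIntegral.sub_le_integral_of_hasDeriv_right_of_le hab (by fun_prop)
    (fun t _ => (hV t).hasDerivWithinAt) (φ := fun t => g t ^ 2 - ε' t ^ 2)
    (by fun_prop : Continuous fun t => g t ^ 2 - ε' t ^ 2).integrableOn_Icc
    (fun t _ => by nlinarith [sq_nonneg (g t - ε' t)])
  rw [intervalIntegral.integral_sub (Continuous.intervalIntegrable (by fun_prop) a b)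
    (Continuous.intervalIntegrable (by fun_prop) a b)] at hle
  linarith

theorem crossTerm_add_integral_le (h : IsDampedOscillatorSolution τ μ g ε ε' ε'') (hμ : 0 < μ)
    (hab : a ≤ b) :
    2 * τ * ε b * ε' b + ε b ^ 2 + μ * (∫ t in a..b, ε t ^ 2) ≤
      2 * τ * ε a * ε' a + ε a ^ 2 + 2 * τ * (∫ t in a..b, ε' t ^ 2) +
        μ⁻¹ * (∫ t in a..b, g t ^ 2) := by
  have hε := h.continuous; have hε' := h.continuous_deriv; have hg := h.continuous_forcing
  have hW : ∀ t, HasDerivAt (fun t => 2 * τ * ε t * ε' t + ε t ^ 2)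
      (2 * τ * ε' t ^ 2 + 2 * ε t * g t - 2 * μ * ε t ^ 2) t := fun t =>
    ((((h.hasDerivAt t).const_mul (2 * τ)).mul (h.hasDerivAt_deriv t)).add
      ((h.hasDerivAt t).pow 2)).congr_deriv (by rw [h.forcing_eq t]; push_cast; ring)
  have hle := intervalIntegral.sub_le_integral_of_hasDeriv_right_of_le hab (by fun_prop)
    (fun t _ => (hW t).hasDerivWithinAt)
    (φ := fun t => 2 * τ * ε' t ^ 2 + μ⁻¹ * g t ^ 2 - μ * ε t ^ 2)
    (by fun_prop : Continuous fun t => 2 * τ * ε' t ^ 2 + μ⁻¹ * g t ^ 2 - μ * ε t ^ 2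
      ).integrableOn_Icc
    (fun t _ => by nlinarith [two_mul_le_add_mul_sq (a := ε t) (b := g t) hμ])
  have ii : ∀ {f : ℝ → ℝ}, Continuous f → IntervalIntegrable f volume a b :=
    fun hf => hf.intervalIntegrable a b
  rw [intervalIntegral.integral_sub (ii (by fun_prop)) (ii (by fun_prop)),
    intervalIntegral.integral_add (ii (by fun_prop)) (ii (by fun_prop)),
    intervalIntegral.integral_const_mul, intervalIntegral.integral_const_mul,
    intervalIntegral.integral_const_mul] at hle
  linarith

theorem energy_add_integral_le_of_integrableOn (h : IsDampedOscillatorSolution τ μ g ε ε' ε'')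
    (hg2 : IntegrableOn (fun t => g t ^ 2) (Ici a)) (hab : a ≤ b) :
    μ * ε b ^ 2 + τ * ε' b ^ 2 + (∫ t in a..b, ε' t ^ 2) ≤
      μ * ε a ^ 2 + τ * ε' a ^ 2 + ∫ t in Ici a, g t ^ 2 :=
  (h.energy_add_integral_le hab).trans <| add_le_add_right
    (intervalIntegral_le_setIntegral_Ici hg2 (fun _ => sq_nonneg _) hab) _

theorem integrableOn_deriv_sq (h : IsDampedOscillatorSolution τ μ g ε ε' ε'') (hτ : 0 ≤ τ)
    (hμ : 0 ≤ μ) (hg2 : IntegrableOn (fun t => g t ^ 2) (Ici a)) :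
    IntegrableOn (fun t => ε' t ^ 2) (Ici a) := by
  refine integrableOn_Ici_of_intervalIntegral_le_s16 (h.continuous_deriv.pow 2).locallyIntegrable
    (fun _ => sq_nonneg _) (C := μ * ε a ^ 2 + τ * ε' a ^ 2 + ∫ t in Ici a, g t ^ 2)
    fun b hb => ?_
  have hV : 0 ≤ μ * ε b ^ 2 + τ * ε' b ^ 2 := by positivity
  linarith [h.energy_add_integral_le_of_integrableOn hg2 hb]

theorem integrableOn_sq (h : IsDampedOscillatorSolution τ μ g ε ε' ε'') (hτ : 0 ≤ τ)
    (hμ : 0 < μ) (hg2 : IntegrableOn (fun t => g t ^ 2) (Ici a)) :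
    IntegrableOn (fun t => ε t ^ 2) (Ici a) := by
  set G := ∫ t in Ici a, g t ^ 2
  set B := μ * ε a ^ 2 + τ * ε' a ^ 2 + G
  refine integrableOn_Ici_of_intervalIntegral_le_s16 (h.continuous.pow 2).locallyIntegrable
    (fun _ => sq_nonneg _) (C := (2 * τ * ε a * ε' a + ε a ^ 2 + 3 * τ * B + μ⁻¹ * G) / μ)
    fun b hb => ?_
  have hE := h.energy_add_integral_le_of_integrableOn hg2 hb
  have hD : 0 ≤ ∫ t in a..b, ε' t ^ 2 := intervalIntegral.integral_nonneg hb fun t _ => sq_nonneg _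
  have hkin : τ * ε' b ^ 2 ≤ B := by nlinarith [sq_nonneg (ε b)]
  have hdiss : (∫ t in a..b, ε' t ^ 2) ≤ B := by nlinarith [sq_nonneg (ε b), sq_nonneg (ε' b)]
  have hcross : -(τ * (τ * ε' b ^ 2)) ≤ 2 * τ * ε b * ε' b + ε b ^ 2 := by
    nlinarith [sq_nonneg (τ * ε' b + ε b)]
  have hforce : μ⁻¹ * (∫ t in a..b, g t ^ 2) ≤ μ⁻¹ * G := by
    gcongr
    exact intervalIntegral_le_setIntegral_Ici hg2 (fun _ => sq_nonneg _) hb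
  rw [le_div_iff₀' hμ]
  linarith [h.crossTerm_add_integral_le hμ hb, mul_le_mul_of_nonneg_left hkin hτ,
    mul_le_mul_of_nonneg_left hdiss hτ]

end IsDampedOscillatorSolution

/-- L²-input implies L²-state for the exponentially stable system
`τε'' + ε' + με = g` (`τ, μ > 0`): if `∫_0^∞ |g|² < ∞` then
`∫_0^∞ |ε|² < ∞`, `∫_0^∞ |ε'|² < ∞` and `ε(t) → 0` as `t → ∞`. -/
theorem second_order_stable_L2_input_L2_state
    (τ μ : ℝ) (hτ : 0 < τ) (hμ : 0 < μ)
    (ε : ℝ → ℝ) (hε : ContDiff ℝ 2 ε)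
    (g : ℝ → ℝ)
    (hg : ∀ t, g t = τ * deriv (deriv ε) t + deriv ε t + μ * ε t)
    (hg_L2 : IntegrableOn (fun t => |g t| ^ 2) (Set.Ici (0 : ℝ))) :
    IntegrableOn (fun t => |ε t| ^ 2) (Set.Ici (0 : ℝ)) ∧
    IntegrableOn (fun t => |deriv ε t| ^ 2) (Set.Ici (0 : ℝ)) ∧
    Filter.Tendsto ε Filter.atTop (nhds 0) := by
  have h : IsDampedOscillatorSolution τ μ g ε (deriv ε) (deriv (deriv ε)) :=
    { hasDerivAt := fun t => (hε.differentiable (by norm_num) t).hasDerivAt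
      hasDerivAt_deriv := fun t => ((hε.iterate_deriv' 1 1).differentiable one_ne_zero t).hasDerivAt
      continuous_deriv₂ := (hε.iterate_deriv' 0 2).continuous
      forcing_eq := hg }
  simp only [sq_abs] at hg_L2 ⊢
  have hε2 := h.integrableOn_sq hτ.le hμ hg_L2
  have hε'2 := h.integrableOn_deriv_sq hτ.le hμ.le hg_L2
  exact ⟨hε2, hε'2, tendsto_zero_of_integrableOn_sq h.hasDerivAt
    (hε2.mono_set Ioi_subset_Ici_self) (hε'2.mono_set Ioi_subset_Ici_self)⟩
end
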